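/- Let U ⊆ ℝⁿ be open, let g₁, g₂ : U → (ℝⁿ →ₗ ℝⁿ →ₗ ℝ) be two smooth maps with each g₁(q) and each g₂(q) a symmetric nondegenerate bilinear form, with Christoffel symbols Γ₁ and Γ₂ and kinetic energies T₁(q,v) = (1/2) g₁(q)(v,v), T₂(q,v) = (1/2) g₂(q)(v,v) respectively, and let α : U × ℝⁿ → (ℝⁿ)* be a horizontal 1-form. Let D₁ and D₂ be the Newton fields of the mechanical systems (U, g₁, α) and (U, g₂, α), i.e. Dₐ(q,v) = (v, fₐ(q,v)) with fₐˡ(q,v) = −( Σ_k gₐ^{lk}(q) α_k(q,v) + Σ_{i,j} (Γₐ)ˡ_{ij}(q) vⁱ vʲ ) for a = 1, 2. Then D₁ T₁ = 0 everywhere on U × ℝⁿ if and only if D₂ T₂ = 0 everywhere on U × ℝⁿ; both are equivalent to α(q,v)(v) = 0 for all (q,v). Thus the work forms corresponding to relativistic fields are the same independently of the metric: they are the contact forms. -/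

import Mathlib

/-- The `i`-th standard basis vector of `ℝⁿ`. -/
noncomputable def basisVec {n : ℕ} (i : Fin n) : Fin n → ℝ := Pi.single i 1

/-- The Christoffel symbols `Γˡ_{ij}(q) = (1/2) Σ_k g^{lk}(q) (∂_i g_{jk} + ∂_j g_{ik} − ∂_k g_{ij})(q)`
of a metric `g` with inverse coefficients `ginv`. -/
noncomputable def christoffel {n : ℕ}
    (g : (Fin n → ℝ) → ((Fin n → ℝ) →L[ℝ] (Fin n → ℝ) →L[ℝ] ℝ))
    (ginv : (Fin n → ℝ) → Fin n → Fin n → ℝ)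
    (l i j : Fin n) (q : Fin n → ℝ) : ℝ :=
  (1/2) * ∑ k, ginv q l k *
    (fderiv ℝ (fun p => g p (basisVec j) (basisVec k)) q (basisVec i)
      + fderiv ℝ (fun p => g p (basisVec i) (basisVec k)) q (basisVec j)
      - fderiv ℝ (fun p => g p (basisVec i) (basisVec j)) q (basisVec k))

/-- The kinetic energy `T(q,v) = (1/2) g(q)(v,v)` on `U × ℝⁿ`. -/
noncomputable def kineticEnergy {n : ℕ}
    (g : (Fin n → ℝ) → ((Fin n → ℝ) →L[ℝ] (Fin n → ℝ) →L[ℝ] ℝ)) :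
    (Fin n → ℝ) × (Fin n → ℝ) → ℝ :=
  fun p => (1/2) * g p.1 p.2 p.2

/-
Along the Newton field, `D T = ½ ∂_v g (v, v) + g (v, f)`. Since `g · g⁻¹ = 1`, the pairing
`g (v, f)` lowers the index of `f`: it equals `-α(v) - Γ_{k,ij} vᵏ vⁱ vʲ` with the Christoffel
symbols of the first kind `Γ_{k,ij} = ½ (∂_i g_jk + ∂_j g_ik - ∂_k g_ij)`, and the full
contraction of these with `v` is `½ ∂_v g (v, v)`. Hence `D T = -α(v)` for every metric.
-/

open Matrix

section BasisExpansion

variable {n : ℕ}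

lemma ContinuousLinearMap.apply_eq_sum_smul_basisVec {M : Type*} [AddCommMonoid M] [Module ℝ M]
    [TopologicalSpace M] (L : (Fin n → ℝ) →L[ℝ] M) (v : Fin n → ℝ) :
    L v = ∑ i, v i • L (basisVec i) := by
  have hbasis : ∀ i : Fin n, basisVec i = fun j => if i = j then 1 else 0 := fun i => by
    ext j; simp [basisVec, Pi.single_apply, eq_comm]
  simpa only [hbasis, ContinuousLinearMap.coe_coe] using L.toLinearMap.pi_apply_eq_sum_univ v

lemma ContinuousLinearMap.apply_eq_dotProduct (L : (Fin n → ℝ) →L[ℝ] ℝ) (v : Fin n → ℝ) :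
    L v = v ⬝ᵥ fun k => L (basisVec k) :=
  L.apply_eq_sum_smul_basisVec v

lemma trilinear_apply_eq_sum
    (D : (Fin n → ℝ) →L[ℝ] (Fin n → ℝ) →L[ℝ] (Fin n → ℝ) →L[ℝ] ℝ) (u w x : Fin n → ℝ) :
    D u w x = ∑ i, ∑ j, ∑ k, u i * w j * x k * D (basisVec i) (basisVec j) (basisVec k) := by
  have hu := D.apply_eq_sum_smul_basisVec u
  have hw := fun i => (D (basisVec i)).apply_eq_sum_smul_basisVec w
  have hx := fun i j => (D (basisVec i) (basisVec j)).apply_eq_sum_smul_basisVec x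
  simp only [hu, hw, hx, _root_.sum_apply, _root_.smul_apply, smul_eq_mul, Finset.mul_sum,
    mul_assoc]

end BasisExpansion

section CoeffMatrix

variable {n : ℕ}

noncomputable def coeffMatrix (B : (Fin n → ℝ) →L[ℝ] (Fin n → ℝ) →L[ℝ] ℝ) :
    Matrix (Fin n) (Fin n) ℝ :=
  Matrix.of fun i j => B (basisVec i) (basisVec j)

lemma apply_eq_dotProduct_coeffMatrix_mulVec (B : (Fin n → ℝ) →L[ℝ] (Fin n → ℝ) →L[ℝ] ℝ)
    (u w : Fin n → ℝ) : B u w = u ⬝ᵥ (coeffMatrix B *ᵥ w) := by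
  have hu := B.apply_eq_sum_smul_basisVec u
  have hw := fun i => (B (basisVec i)).apply_eq_sum_smul_basisVec w
  simp only [hu, hw, _root_.sum_apply, _root_.smul_apply, smul_eq_mul, dotProduct, mulVec,
    coeffMatrix, Matrix.of_apply, Finset.mul_sum]
  exact Finset.sum_congr rfl fun i _ => Finset.sum_congr rfl fun j _ => by ring

lemma apply_mulVec_eq_dotProduct {B : (Fin n → ℝ) →L[ℝ] (Fin n → ℝ) →L[ℝ] ℝ}
    {M : Matrix (Fin n) (Fin n) ℝ} (hM : coeffMatrix B * M = 1) (u x : Fin n → ℝ) :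
    B u (M *ᵥ x) = u ⬝ᵥ x := by
  rw [apply_eq_dotProduct_coeffMatrix_mulVec, mulVec_mulVec, hM, one_mulVec]

lemma coeffMatrix_mul_eq_one_iff (B : (Fin n → ℝ) →L[ℝ] (Fin n → ℝ) →L[ℝ] ℝ)
    (M : Matrix (Fin n) (Fin n) ℝ) :
    coeffMatrix B * M = 1 ↔
      ∀ i j, ∑ k, B (basisVec i) (basisVec k) * M k j = if i = j then 1 else 0 := by
  simp only [← Matrix.ext_iff, mul_apply, one_apply, coeffMatrix, Matrix.of_apply]

end CoeffMatrix

section Christoffel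

variable {n : ℕ}

/-- With `D = fderiv ℝ g q`, `D a b c = ∂_a g(b, c)`, so this is `k ↦ Γ_{k,ij}`. -/
noncomputable def christoffelFirstKind
    (D : (Fin n → ℝ) →L[ℝ] (Fin n → ℝ) →L[ℝ] (Fin n → ℝ) →L[ℝ] ℝ) (i j : Fin n) : Fin n → ℝ := fun k =>
  (1/2) * (D (basisVec i) (basisVec j) (basisVec k)
    + D (basisVec j) (basisVec i) (basisVec k) - D (basisVec k) (basisVec i) (basisVec j))

lemma fderiv_apply_apply {g : (Fin n → ℝ) → ((Fin n → ℝ) →L[ℝ] (Fin n → ℝ) →L[ℝ] ℝ)}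
    {q : Fin n → ℝ} (hg : DifferentiableAt ℝ g q) (u w x : Fin n → ℝ) :
    fderiv ℝ (fun p => g p u w) q x = fderiv ℝ g q x u w := by
  rw [fderiv_clm_apply (hg.clm_apply (differentiableAt_const u)) (differentiableAt_const w),
    fderiv_clm_apply hg (differentiableAt_const u)]
  simp

lemma christoffel_eq_mulVec_christoffelFirstKind
    {g : (Fin n → ℝ) → ((Fin n → ℝ) →L[ℝ] (Fin n → ℝ) →L[ℝ] ℝ)}
    {q : Fin n → ℝ} (hg : DifferentiableAt ℝ g q) (ginv : (Fin n → ℝ) → Fin n → Fin n → ℝ)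
    (i j : Fin n) :
    (fun l => christoffel g ginv l i j q)
      = Matrix.of (ginv q) *ᵥ christoffelFirstKind (fderiv ℝ g q) i j := by
  ext l
  simp only [christoffel, christoffelFirstKind, fderiv_apply_apply hg, mulVec, dotProduct,
    Matrix.of_apply, Finset.mul_sum]
  exact Finset.sum_congr rfl fun k _ => by ring

lemma sum_mul_dotProduct_christoffelFirstKind
    (D : (Fin n → ℝ) →L[ℝ] (Fin n → ℝ) →L[ℝ] (Fin n → ℝ) →L[ℝ] ℝ) (v : Fin n → ℝ) :
    ∑ i, ∑ j, v i * v j * (v ⬝ᵥ christoffelFirstKind D i j) = (1/2) * D v v v := by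
  set F : Fin n → Fin n → Fin n → ℝ :=
    fun i j k => v i * v j * v k * D (basisVec i) (basisVec j) (basisVec k) with hF
  have hswap : ∑ i, ∑ j, ∑ k, F j i k = ∑ i, ∑ j, ∑ k, F i j k := Finset.sum_comm
  have hcycle : ∑ i, ∑ j, ∑ k, F k i j = ∑ i, ∑ j, ∑ k, F i j k :=
    (Finset.sum_congr rfl fun _ _ => Finset.sum_comm).trans Finset.sum_comm
  have hexpand : ∑ i, ∑ j, ∑ k, F i j k = D v v v := (trilinear_apply_eq_sum D v v v).symm
  calc ∑ i, ∑ j, v i * v j * (v ⬝ᵥ christoffelFirstKind D i j)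
      = ∑ i, ∑ j, ∑ k, (1/2) * (F i j k + F j i k - F k i j) := by
        simp only [dotProduct, christoffelFirstKind, Finset.mul_sum, hF]
        exact Finset.sum_congr rfl fun i _ => Finset.sum_congr rfl fun j _ =>
          Finset.sum_congr rfl fun k _ => by ring
    _ = (1/2) * ((∑ i, ∑ j, ∑ k, F i j k) + (∑ i, ∑ j, ∑ k, F j i k)
          - ∑ i, ∑ j, ∑ k, F k i j) := by
        simp only [← Finset.mul_sum, Finset.sum_add_distrib, Finset.sum_sub_distrib]
    _ = (1/2) * D v v v := by
        rw [hswap, hcycle, hexpand]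
        ring

end Christoffel

section Newton

variable {n : ℕ} {g : (Fin n → ℝ) → ((Fin n → ℝ) →L[ℝ] (Fin n → ℝ) →L[ℝ] ℝ)}

lemma fderiv_kineticEnergy_apply {q : Fin n → ℝ} (hg : DifferentiableAt ℝ g q)
    (v w : Fin n → ℝ) :
    fderiv ℝ (kineticEnergy g) (q, v) (v, w)
      = (1/2) * (fderiv ℝ g q v v v + g q w v + g q v w) := by
  have hgq :=
    HasFDerivAt.comp (g := g) (g' := fderiv ℝ g q) (q, v) hg.hasFDerivAt hasFDerivAt_fst
  have hT : HasFDerivAt (kineticEnergy g) _ (q, v) :=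
    ((hgq.clm_apply hasFDerivAt_snd).clm_apply hasFDerivAt_snd).const_mul (1/2 : ℝ)
  rw [hT.fderiv]
  simp only [Function.comp_apply, ContinuousLinearMap.flip_add, _root_.add_apply, smul_add,
    _root_.smul_apply, ContinuousLinearMap.comp_apply, ContinuousLinearMap.coe_snd', smul_eq_mul,
    ContinuousLinearMap.flip_apply, ContinuousLinearMap.coe_fst']
  ring

lemma fderiv_kineticEnergy_apply_newton {q v : Fin n → ℝ} (hg : DifferentiableAt ℝ g q)
    (hsymm : ∀ u w : Fin n → ℝ, g q u w = g q w u) {ginv : (Fin n → ℝ) → Fin n → Fin n → ℝ}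
    (hginv : coeffMatrix (g q) * Matrix.of (ginv q) = 1) (a : (Fin n → ℝ) →L[ℝ] ℝ)
    {w : Fin n → ℝ} (hw : ∀ l, w l = -((∑ k, ginv q l k * a (basisVec k))
        + ∑ i, ∑ j, christoffel g ginv l i j q * v i * v j)) :
    fderiv ℝ (kineticEnergy g) (q, v) (v, w) = -a v := by
  have hw_lowered : w = -(Matrix.of (ginv q) *ᵥ ((fun k => a (basisVec k))
      + ∑ i, ∑ j, (v i * v j) • christoffelFirstKind (fderiv ℝ g q) i j)) := by
    ext l
    rw [hw l]
    simp only [mulVec_add, mulVec_sum, mulVec_smul,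
      ← christoffel_eq_mulVec_christoffelFirstKind hg]
    simp only [Pi.neg_apply, Pi.add_apply, Finset.sum_apply, Pi.smul_apply, smul_eq_mul, mulVec,
      dotProduct, Matrix.of_apply]
    congr 2
    exact Finset.sum_congr rfl fun i _ => Finset.sum_congr rfl fun j _ => by ring
  have hgw : g q v w = -a v - (1/2) * fderiv ℝ g q v v v := by
    rw [hw_lowered, map_neg, apply_mulVec_eq_dotProduct hginv, dotProduct_add, dotProduct_sum,
      ← a.apply_eq_dotProduct]
    simp only [dotProduct_sum, dotProduct_smul, smul_eq_mul,
      sum_mul_dotProduct_christoffelFirstKind]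
    ring
  rw [fderiv_kineticEnergy_apply hg, hsymm w v, hgw]
  ring

end Newton

lemma newtonField_relativistic_iff_contact {n : ℕ} {U : Set (Fin n → ℝ)} (hU : IsOpen U)
    {g : (Fin n → ℝ) → ((Fin n → ℝ) →L[ℝ] (Fin n → ℝ) →L[ℝ] ℝ)}
    (hg : ContDiffOn ℝ (⊤ : ℕ∞) g U) (hsymm : ∀ q ∈ U, ∀ u w : Fin n → ℝ, g q u w = g q w u)
    {ginv : (Fin n → ℝ) → Fin n → Fin n → ℝ}
    (hginv : ∀ q ∈ U, ∀ i j : Fin n,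
      (∑ k, g q (basisVec i) (basisVec k) * ginv q k j) = if i = j then 1 else 0)
    {α : (Fin n → ℝ) × (Fin n → ℝ) → ((Fin n → ℝ) →L[ℝ] ℝ)}
    {f : (Fin n → ℝ) × (Fin n → ℝ) → (Fin n → ℝ)}
    (hf : ∀ q ∈ U, ∀ (v : Fin n → ℝ) (l : Fin n),
      f (q, v) l = -((∑ k, ginv q l k * α (q, v) (basisVec k))
        + ∑ i, ∑ j, christoffel g ginv l i j q * v i * v j)) :
    (∀ q ∈ U, ∀ v : Fin n → ℝ, fderiv ℝ (kineticEnergy g) (q, v) (v, f (q, v)) = 0)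
      ↔ ∀ q ∈ U, ∀ v : Fin n → ℝ, α (q, v) v = 0 := by
  have hdT : ∀ q ∈ U, ∀ v, fderiv ℝ (kineticEnergy g) (q, v) (v, f (q, v)) = -α (q, v) v :=
    fun q hq v => fderiv_kineticEnergy_apply_newton
      ((hg.contDiffAt (hU.mem_nhds hq)).differentiableAt (by simp)) (hsymm q hq)
      ((coeffMatrix_mul_eq_one_iff _ _).2 (hginv q hq)) (α (q, v)) (hf q hq v)
  refine forall₂_congr fun q hq => forall_congr' fun v => ?_
  rw [hdT q hq v, neg_eq_zero]

theorem relativistic_work_forms_independent_of_metric_general {n : ℕ}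
    (U : Set (Fin n → ℝ)) (hU : IsOpen U)
    (g₁ g₂ : (Fin n → ℝ) → ((Fin n → ℝ) →L[ℝ] (Fin n → ℝ) →L[ℝ] ℝ))
    (hg₁ : ContDiffOn ℝ (⊤ : ℕ∞) g₁ U)
    (hg₂ : ContDiffOn ℝ (⊤ : ℕ∞) g₂ U)
    (hsymm₁ : ∀ q ∈ U, ∀ u w : Fin n → ℝ, g₁ q u w = g₁ q w u)
    (hsymm₂ : ∀ q ∈ U, ∀ u w : Fin n → ℝ, g₂ q u w = g₂ q w u)
    (ginv₁ ginv₂ : (Fin n → ℝ) → Fin n → Fin n → ℝ)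
    (hginv₁ : ∀ q ∈ U, ∀ i j : Fin n,
      (∑ k, g₁ q (basisVec i) (basisVec k) * ginv₁ q k j) = if i = j then 1 else 0)
    (hginv₂ : ∀ q ∈ U, ∀ i j : Fin n,
      (∑ k, g₂ q (basisVec i) (basisVec k) * ginv₂ q k j) = if i = j then 1 else 0)
    (α : (Fin n → ℝ) × (Fin n → ℝ) → ((Fin n → ℝ) →L[ℝ] ℝ))
    (f₁ f₂ : (Fin n → ℝ) × (Fin n → ℝ) → (Fin n → ℝ))
    (hf₁ : ∀ q ∈ U, ∀ (v : Fin n → ℝ) (l : Fin n),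
      f₁ (q, v) l = -((∑ k, ginv₁ q l k * α (q, v) (basisVec k))
        + ∑ i, ∑ j, christoffel g₁ ginv₁ l i j q * v i * v j))
    (hf₂ : ∀ q ∈ U, ∀ (v : Fin n → ℝ) (l : Fin n),
      f₂ (q, v) l = -((∑ k, ginv₂ q l k * α (q, v) (basisVec k))
        + ∑ i, ∑ j, christoffel g₂ ginv₂ l i j q * v i * v j)) :
    ((∀ q ∈ U, ∀ v : Fin n → ℝ,
        fderiv ℝ (kineticEnergy g₁) (q, v) (v, f₁ (q, v)) = 0)
      ↔ (∀ q ∈ U, ∀ v : Fin n → ℝ,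
        fderiv ℝ (kineticEnergy g₂) (q, v) (v, f₂ (q, v)) = 0))
    ∧
    ((∀ q ∈ U, ∀ v : Fin n → ℝ,
        fderiv ℝ (kineticEnergy g₁) (q, v) (v, f₁ (q, v)) = 0)
      ↔ (∀ q ∈ U, ∀ v : Fin n → ℝ, α (q, v) v = 0))
    ∧
    ((∀ q ∈ U, ∀ v : Fin n → ℝ,
        fderiv ℝ (kineticEnergy g₂) (q, v) (v, f₂ (q, v)) = 0)
      ↔ (∀ q ∈ U, ∀ v : Fin n → ℝ, α (q, v) v = 0)) := by
  have h₁ := newtonField_relativistic_iff_contact hU hg₁ hsymm₁ hginv₁ hf₁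
  have h₂ := newtonField_relativistic_iff_contact hU hg₂ hsymm₂ hginv₂ hf₂
  exact ⟨h₁.trans h₂.symm, h₁, h₂⟩

/-- Let `g₁`, `g₂` be two metrics on `U` with Newton fields `D₁`, `D₂`
of the mechanical systems `(U, g₁, α)` and `(U, g₂, α)`. Then `D₁ T₁ = 0` everywhere iff
`D₂ T₂ = 0` everywhere; both are equivalent to `α` being a contact form. The work forms
of relativistic fields are thus the same independently of the metric. -/
theorem relativistic_work_forms_independent_of_metric {n : ℕ}
    (U : Set (Fin n → ℝ)) (hU : IsOpen U)
    (g₁ g₂ : (Fin n → ℝ) → ((Fin n → ℝ) →L[ℝ] (Fin n → ℝ) →L[ℝ] ℝ))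
    (hg₁ : ContDiffOn ℝ (⊤ : ℕ∞) g₁ U)
    (hg₂ : ContDiffOn ℝ (⊤ : ℕ∞) g₂ U)
    (hsymm₁ : ∀ q ∈ U, ∀ u w : Fin n → ℝ, g₁ q u w = g₁ q w u)
    (hsymm₂ : ∀ q ∈ U, ∀ u w : Fin n → ℝ, g₂ q u w = g₂ q w u)
    (hnondeg₁ : ∀ q ∈ U, ∀ u : Fin n → ℝ, (∀ w, g₁ q u w = 0) → u = 0)
    (hnondeg₂ : ∀ q ∈ U, ∀ u : Fin n → ℝ, (∀ w, g₂ q u w = 0) → u = 0)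
    (ginv₁ ginv₂ : (Fin n → ℝ) → Fin n → Fin n → ℝ)
    (hginv₁ : ∀ q ∈ U, ∀ i j : Fin n,
      (∑ k, g₁ q (basisVec i) (basisVec k) * ginv₁ q k j) = if i = j then 1 else 0)
    (hginv₂ : ∀ q ∈ U, ∀ i j : Fin n,
      (∑ k, g₂ q (basisVec i) (basisVec k) * ginv₂ q k j) = if i = j then 1 else 0)
    (α : (Fin n → ℝ) × (Fin n → ℝ) → ((Fin n → ℝ) →L[ℝ] ℝ))
    (f₁ f₂ : (Fin n → ℝ) × (Fin n → ℝ) → (Fin n → ℝ))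
    (hf₁ : ∀ q ∈ U, ∀ (v : Fin n → ℝ) (l : Fin n),
      f₁ (q, v) l = -((∑ k, ginv₁ q l k * α (q, v) (basisVec k))
        + ∑ i, ∑ j, christoffel g₁ ginv₁ l i j q * v i * v j))
    (hf₂ : ∀ q ∈ U, ∀ (v : Fin n → ℝ) (l : Fin n),
      f₂ (q, v) l = -((∑ k, ginv₂ q l k * α (q, v) (basisVec k))
        + ∑ i, ∑ j, christoffel g₂ ginv₂ l i j q * v i * v j)) :
    ((∀ q ∈ U, ∀ v : Fin n → ℝ,
        fderiv ℝ (kineticEnergy g₁) (q, v) (v, f₁ (q, v)) = 0)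
      ↔ (∀ q ∈ U, ∀ v : Fin n → ℝ,
        fderiv ℝ (kineticEnergy g₂) (q, v) (v, f₂ (q, v)) = 0))
    ∧
    ((∀ q ∈ U, ∀ v : Fin n → ℝ,
        fderiv ℝ (kineticEnergy g₁) (q, v) (v, f₁ (q, v)) = 0)
      ↔ (∀ q ∈ U, ∀ v : Fin n → ℝ, α (q, v) v = 0))
    ∧
    ((∀ q ∈ U, ∀ v : Fin n → ℝ,
        fderiv ℝ (kineticEnergy g₂) (q, v) (v, f₂ (q, v)) = 0)
      ↔ (∀ q ∈ U, ∀ v : Fin n → ℝ, α (q, v) v = 0)) :=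
  relativistic_work_forms_independent_of_metric_general U hU g₁ g₂ hg₁ hg₂ hsymm₁ hsymm₂ ginv₁ ginv₂
    hginv₁ hginv₂ α f₁ f₂ hf₁ hf₂
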